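/- The map φ from expressions in 𝔍'_n to bracketings of a_1...a_{n+1} is injective: distinct placements of 'f' symbols and '·' symbols (together with the domain/codomain bracketings) yield distinct bracketings of the extended word, since each 'f' corresponds to a parenthesis pair to the right of which a_{n+1} appears, and each '·' to an absent parenthesis. -/

import Mathlib

/-- Planar rooted trees (associations of a word: each internal node is a
bracketed product of its children). -/
inductive WT : Type
  | lf : WT
  | nd : List WT → WT

/-- Number of leaves (letters). -/
def WT.leaves : WT → ℕ
  | .lf => 1
  | .nd l => (l.attach.map (fun x => WT.leaves x.1)).sum
decreasing_by
  have := List.sizeOf_lt_of_mem x.2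
  simp only [WT.nd.sizeOf_spec]
  omega

/-- A valid association: every internal node has at least two children
(no redundant brackets). -/
def WT.valid : WT → Prop
  | .lf => True
  | .nd l => 2 ≤ l.length ∧ ∀ t ∈ l, t.valid
decreasing_by
  have := List.sizeOf_lt_of_mem ‹t ∈ l›
  simp only [WT.nd.sizeOf_spec]
  omega

/-- `WAdd t t'` : the association `t` is obtained from `t'` by adding one
(non-redundant) pair of brackets around at least two consecutive factors;
equivalently, `t'` is obtained from `t` by collapsing one internal edge. -/
inductive WAdd : WT → WT → Prop
  | here (l₁ m l₂ : List WT) (hm : 2 ≤ m.length) (h : 1 ≤ l₁.length + l₂.length) :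
      WAdd (.nd (l₁ ++ [.nd m] ++ l₂)) (.nd (l₁ ++ m ++ l₂))
  | under (l₁ l₂ : List WT) {a b : WT} (h : WAdd a b) :
      WAdd (.nd (l₁ ++ [a] ++ l₂)) (.nd (l₁ ++ [b] ++ l₂))

/-- An element of the poset `𝔍'_n` underlying the collapsed multiplihedron: a
list of `f`-factors (type I / II / degenerate type III: since the codomain is
strictly associative there is no codomain bracketing, so the expression is just
a product `f(...)f(...)...f(...)`), each factor being a list of blocks separated
by the painted-product symbol `·`, each block an association of consecutive
letters. -/
abbrev JE : Type := List (List WT)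

/-- Validity: at least one `f`-factor, each factor applied to at least one
block, all blocks valid associations. -/
def JE.valid (L : JE) : Prop :=
  L ≠ [] ∧ ∀ bl ∈ L, bl ≠ [] ∧ ∀ t ∈ bl, t.valid

/-- Total number of letters. -/
def JE.letters (L : JE) : ℕ := (L.map (fun bl => (bl.map WT.leaves).sum)).sum

/-- `JEOp P' P` : `P` is obtained from `P'` by one of the generating moves of
`𝔍'_n` (so `P ≺ P'`): adding a bracket pair in the domain, replacing `·` by
`)f(`, or removing consecutive `·`s by adding an enclosing bracket pair. -/
inductive JEOp : JE → JE → Prop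
  | domBracket (A B : JE) (u v : List WT) {t t' : WT} (h : WAdd t' t) :
      JEOp (A ++ [u ++ [t] ++ v] ++ B) (A ++ [u ++ [t'] ++ v] ++ B)
  | dotToF (A B : JE) (xs ys : List WT) (hx : xs ≠ []) (hy : ys ≠ []) :
      JEOp (A ++ [xs ++ ys] ++ B) (A ++ [xs, ys] ++ B)
  | remDots (A B : JE) (u m v : List WT) (hm : 2 ≤ m.length) :
      JEOp (A ++ [u ++ m ++ v] ++ B) (A ++ [u ++ [WT.nd m] ++ v] ++ B)

/-- The order on `𝔍'_n`: `P ≤ P'` iff `P` is obtained from `P'` by a sequence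
of generating moves. -/
def JE.Le (P P' : JE) : Prop := Relation.ReflTransGen JEOp P' P

mutual
/-- The parenthesis pairs contributed by the block `t`, whose letters occupy
positions `off+1, ..., off + t.leaves`: every internal node of `t` (including
its root) is a bracket pair. -/
def WT.brs : ℕ → WT → Finset (ℕ × ℕ)
  | _, .lf => ∅
  | off, .nd l => insert (off + 1, off + (l.map WT.leaves).sum) (brsList off l)
/-- Brackets of a list of consecutive blocks starting at offset `off`. -/
def brsList : ℕ → List WT → Finset (ℕ × ℕ)
  | _, [] => ∅
  | off, t :: ts => WT.brs off t ∪ brsList (off + t.leaves) ts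
end

/-- The parenthesis pairs coming from the `f`-factors: `φ` sends
`f(X₁)...f(X_k)` to the right-nested `(X₁)(...((X_{k-1})((X_k)a_{N+1}))...)`, so
each `f`-factor other than the first contributes the pair reaching from its
first letter to the appended letter `a_{N+1}`. -/
def fBrs (N : ℕ) : ℕ → JE → Finset (ℕ × ℕ)
  | _, [] => ∅
  | off, bl :: rest =>
      (if rest.isEmpty then (∅ : Finset (ℕ × ℕ))
        else {(off + (bl.map WT.leaves).sum + 1, N + 1)}) ∪
      fBrs N (off + (bl.map WT.leaves).sum) rest

/-- The map `φ` from `𝔍'_N` to bracketings of `a_1 ... a_{N+1}`: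
`f(X₁) ↦ (X₁)a_{N+1}`, `f((X₁)· ... ·(X_k)) ↦ (X₁)...(X_k)a_{N+1}`, and
`f(X₁)...f(X_k) ↦ (X₁)(...((X_{k-1})((X_k)a_{N+1}))...)`. -/
def phiFun (N : ℕ) (L : JE) : Finset (ℕ × ℕ) :=
  brsList 0 L.flatten ∪ fBrs N 0 L

/-! ### Auxiliary lemmas for injectivity -/

theorem WT.leaves_nd (l : List WT) : (WT.nd l).leaves = (l.map WT.leaves).sum := by
  rw [WT.leaves]; congr 1; exact List.attach_map_val

theorem WT.valid_nd (l : List WT) : (WT.nd l).valid ↔ 2 ≤ l.length ∧ ∀ t ∈ l, t.valid := by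
  rw [WT.valid]

theorem WT.leaves_lf : WT.leaves .lf = 1 := by rw [WT.leaves]

theorem WT.leaves_pos : ∀ (t : WT), t.valid → 1 ≤ t.leaves
  | .lf, _ => by rw [WT.leaves_lf]
  | .nd l, h => by
    rw [WT.valid] at h
    obtain ⟨hlen, hval⟩ := h
    have hne : l ≠ [] := by rintro rfl; simp at hlen
    obtain ⟨a, ha⟩ := List.exists_mem_of_ne_nil l hne
    have h1 : 1 ≤ a.leaves := WT.leaves_pos a (hval a ha)
    have h2 : a.leaves ≤ (l.map WT.leaves).sum :=
      List.single_le_sum (by simp) _ (List.mem_map_of_mem ha)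
    rw [WT.leaves_nd]
    omega
decreasing_by
  have := List.sizeOf_lt_of_mem ha
  simp only [WT.nd.sizeOf_spec]
  omega

theorem sum_leaves_pos {l : List WT} (h : ∀ t ∈ l, t.valid) (hne : l ≠ []) :
    1 ≤ (l.map WT.leaves).sum := by
  match l, hne with
  | a :: rest, _ =>
    have := WT.leaves_pos a (h a (by simp))
    simp only [List.map_cons, List.sum_cons]
    omega

theorem brs_lf (off : ℕ) : WT.brs off .lf = ∅ := by rw [WT.brs]

theorem brs_nd (off : ℕ) (l : List WT) :
    WT.brs off (.nd l) = insert (off + 1, off + (l.map WT.leaves).sum) (brsList off l) := by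
  rw [WT.brs]

theorem brsList_nil (off : ℕ) : brsList off [] = ∅ := by rw [brsList]

theorem brsList_cons (off : ℕ) (t : WT) (ts : List WT) :
    brsList off (t :: ts) = WT.brs off t ∪ brsList (off + t.leaves) ts := by rw [brsList]

mutual
theorem brs_bdd : ∀ (off : ℕ) (t : WT), t.valid →
    ∀ p ∈ WT.brs off t, off + 1 ≤ p.1 ∧ p.1 ≤ p.2 ∧ p.2 ≤ off + t.leaves
  | off, .lf, _ => by simp [brs_lf]
  | off, .nd l, h => by
    rw [WT.valid] at h
    obtain ⟨hlen, hval⟩ := h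
    intro p hp
    rw [brs_nd, Finset.mem_insert] at hp
    rw [WT.leaves_nd]
    rcases hp with hp | hp
    · subst hp
      have : 1 ≤ (l.map WT.leaves).sum :=
        sum_leaves_pos hval (by rintro rfl; simp at hlen)
      exact ⟨le_refl _, by
        show off + 1 ≤ off + (l.map WT.leaves).sum
        omega, le_refl _⟩
    · exact brsList_bdd off l hval p hp
  termination_by off t => sizeOf t

theorem brsList_bdd : ∀ (off : ℕ) (l : List WT), (∀ t ∈ l, t.valid) →
    ∀ p ∈ brsList off l, off + 1 ≤ p.1 ∧ p.1 ≤ p.2 ∧ p.2 ≤ off + (l.map WT.leaves).sum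
  | off, [], _ => by simp [brsList_nil]
  | off, t :: ts, h => by
    intro p hp
    rw [brsList_cons, Finset.mem_union] at hp
    simp only [List.map_cons, List.sum_cons]
    rcases hp with hp | hp
    · have := brs_bdd off t (h t (by simp)) p hp
      omega
    · have := brsList_bdd (off + t.leaves) ts (fun u hu => h u (by simp [hu])) p hp
      omega
  termination_by off l => sizeOf l
end

/-- The root pair of a valid internal node does not occur among the brackets of
its children. -/
theorem root_not_mem {off : ℕ} {l : List WT} (hlen : 2 ≤ l.length) (hval : ∀ t ∈ l, t.valid) :
    (off + 1, off + (l.map WT.leaves).sum) ∉ brsList off l := by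
  match l, hlen with
  | t :: ts, hlen =>
    have hts : ts ≠ [] := by
      rintro rfl; simp at hlen
    have hsum : 1 ≤ (ts.map WT.leaves).sum :=
      sum_leaves_pos (fun u hu => hval u (by simp [hu])) hts
    have htl : 1 ≤ t.leaves := WT.leaves_pos t (hval t (by simp))
    rw [brsList_cons, Finset.mem_union]
    rintro (hp | hp)
    · have := brs_bdd off t (hval t (by simp)) _ hp
      simp only [List.map_cons, List.sum_cons] at this ⊢
      omega
    · have := brsList_bdd (off + t.leaves) ts (fun u hu => hval u (by simp [hu])) _ hp
      simp only at this
      omega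

mutual
theorem brs_inj : ∀ (off : ℕ) (t u : WT), t.valid → u.valid → t.leaves = u.leaves →
    WT.brs off t = WT.brs off u → t = u
  | off, .lf, .lf, _, _, _, _ => rfl
  | off, .lf, .nd l', _, hu, hleq, heq => by
    exfalso
    have : (off + 1, off + (l'.map WT.leaves).sum) ∈ WT.brs off (.nd l') := by
      rw [brs_nd]; exact Finset.mem_insert_self _ _
    rw [← heq, brs_lf] at this
    simp at this
  | off, .nd l, .lf, ht, _, hleq, heq => by
    exfalso
    have : (off + 1, off + (l.map WT.leaves).sum) ∈ WT.brs off (.nd l) := by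
      rw [brs_nd]; exact Finset.mem_insert_self _ _
    rw [heq, brs_lf] at this
    simp at this
  | off, .nd l, .nd l', ht, hu, hleq, heq => by
    rw [WT.valid] at ht hu
    obtain ⟨hlen, hval⟩ := ht
    obtain ⟨hlen', hval'⟩ := hu
    have hsum : (l.map WT.leaves).sum = (l'.map WT.leaves).sum := by
      rw [WT.leaves_nd, WT.leaves_nd] at hleq; exact hleq
    rw [brs_nd, brs_nd, ← hsum] at heq
    have h1 := root_not_mem (off := off) hlen hval
    have h2 := root_not_mem (off := off) hlen' hval'
    rw [← hsum] at h2
    have : brsList off l = brsList off l' := by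
      have e1 := Finset.erase_insert h1
      have e2 := Finset.erase_insert h2
      rw [← e1, ← e2, heq]
    have := brsList_inj off l l' hval hval' hsum this
    rw [this]
  termination_by off t u => sizeOf t

theorem brsList_inj : ∀ (off : ℕ) (ts us : List WT), (∀ t ∈ ts, t.valid) → (∀ u ∈ us, u.valid) →
    (ts.map WT.leaves).sum = (us.map WT.leaves).sum →
    brsList off ts = brsList off us → ts = us
  | off, [], [], _, _, _, _ => rfl
  | off, [], u :: us, _, hu, hsum, _ => by
    exfalso
    have := WT.leaves_pos u (hu u (by simp))
    simp only [List.map_nil, List.sum_nil, List.map_cons, List.sum_cons] at hsum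
    omega
  | off, t :: ts, [], ht, _, hsum, _ => by
    exfalso
    have := WT.leaves_pos t (ht t (by simp))
    simp only [List.map_nil, List.sum_nil, List.map_cons, List.sum_cons] at hsum
    omega
  | off, t :: ts, u :: us, ht, hu, hsum, heq => by
    have htv : t.valid := ht t (by simp)
    have huv : u.valid := hu u (by simp)
    have htsv : ∀ x ∈ ts, x.valid := fun x hx => ht x (by simp [hx])
    have husv : ∀ x ∈ us, x.valid := fun x hx => hu x (by simp [hx])
    have htl : 1 ≤ t.leaves := WT.leaves_pos t htv
    have hul : 1 ≤ u.leaves := WT.leaves_pos u huv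
    rw [brsList_cons, brsList_cons] at heq
    -- first: t.leaves = u.leaves
    have hleq : t.leaves = u.leaves := by
      rcases t with _ | l <;> rcases u with _ | l'
      · rfl
      · -- t = lf, u = nd l' : root pair of u lies in lhs, impossible
        exfalso
        have hrm : (off + 1, off + (l'.map WT.leaves).sum) ∈
            WT.brs off (.lf) ∪ brsList (off + WT.leaves .lf) ts := by
          rw [heq, brs_nd]
          exact Finset.mem_union_left _ (Finset.mem_insert_self _ _)
        rw [brs_lf, Finset.mem_union] at hrm
        rcases hrm with h | h
        · simp at h
        · have := brsList_bdd _ ts htsv _ h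
          have h1 : WT.leaves .lf = 1 := WT.leaves_lf
          simp only [h1] at this
          omega
      · exfalso
        have hrm : (off + 1, off + (l.map WT.leaves).sum) ∈
            WT.brs off (.lf) ∪ brsList (off + WT.leaves .lf) us := by
          rw [← heq, brs_nd]
          exact Finset.mem_union_left _ (Finset.mem_insert_self _ _)
        rw [brs_lf, Finset.mem_union] at hrm
        rcases hrm with h | h
        · simp at h
        · have := brsList_bdd _ us husv _ h
          have h1 : WT.leaves .lf = 1 := WT.leaves_lf
          simp only [h1] at this
          omega
      · -- both nd
        have hle1 : (WT.nd l).leaves ≤ (WT.nd l').leaves := by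
          have hm : (off + 1, off + (l.map WT.leaves).sum) ∈
              WT.brs off (.nd l') ∪ brsList (off + (WT.nd l').leaves) us := by
            rw [← heq]
            exact Finset.mem_union_left _ (by rw [brs_nd]; exact Finset.mem_insert_self _ _)
          rw [Finset.mem_union] at hm
          rcases hm with h | h
          · have := brs_bdd off _ huv _ h
            rw [WT.leaves_nd]
            omega
          · have := brsList_bdd _ us husv _ h
            have h2 := WT.leaves_pos _ huv
            simp only at this
            omega
        have hle2 : (WT.nd l').leaves ≤ (WT.nd l).leaves := by
          have hm : (off + 1, off + (l'.map WT.leaves).sum) ∈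
              WT.brs off (.nd l) ∪ brsList (off + (WT.nd l).leaves) ts := by
            rw [heq]
            exact Finset.mem_union_left _ (by rw [brs_nd]; exact Finset.mem_insert_self _ _)
          rw [Finset.mem_union] at hm
          rcases hm with h | h
          · have := brs_bdd off _ htv _ h
            rw [WT.leaves_nd]
            omega
          · have := brsList_bdd _ ts htsv _ h
            have h2 := WT.leaves_pos _ htv
            simp only at this
            omega
        omega
    -- split the union equation
    have hsplit1 : WT.brs off t = WT.brs off u := by
      apply Finset.Subset.antisymm
      · intro p hp
        have hb := brs_bdd off t htv p hp
        have : p ∈ WT.brs off u ∪ brsList (off + u.leaves) us := by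
          rw [← heq]; exact Finset.mem_union_left _ hp
        rw [Finset.mem_union] at this
        rcases this with h | h
        · exact h
        · have := brsList_bdd _ us husv _ h
          omega
      · intro p hp
        have hb := brs_bdd off u huv p hp
        have : p ∈ WT.brs off t ∪ brsList (off + t.leaves) ts := by
          rw [heq]; exact Finset.mem_union_left _ hp
        rw [Finset.mem_union] at this
        rcases this with h | h
        · exact h
        · have := brsList_bdd _ ts htsv _ h
          omega
    have hsplit2 : brsList (off + t.leaves) ts = brsList (off + u.leaves) us := by
      apply Finset.Subset.antisymm
      · intro p hp
        have hb := brsList_bdd _ ts htsv p hp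
        have : p ∈ WT.brs off u ∪ brsList (off + u.leaves) us := by
          rw [← heq]; exact Finset.mem_union_right _ hp
        rw [Finset.mem_union] at this
        rcases this with h | h
        · have := brs_bdd off u huv _ h
          omega
        · exact h
      · intro p hp
        have hb := brsList_bdd _ us husv p hp
        have : p ∈ WT.brs off t ∪ brsList (off + t.leaves) ts := by
          rw [heq]; exact Finset.mem_union_right _ hp
        rw [Finset.mem_union] at this
        rcases this with h | h
        · have := brs_bdd off t htv _ h
          omega
        · exact h
    have e1 : t = u := brs_inj off t u htv huv hleq hsplit1
    have hsum' : (ts.map WT.leaves).sum = (us.map WT.leaves).sum := by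
      simp only [List.map_cons, List.sum_cons] at hsum
      omega
    rw [hleq] at hsplit2
    have e2 : ts = us := brsList_inj (off + u.leaves) ts us htsv husv hsum' hsplit2
    rw [e1, e2]
  termination_by off ts us => sizeOf ts
end

theorem fBrs_nil (N off : ℕ) : fBrs N off [] = ∅ := by rw [fBrs]

theorem fBrs_cons (N off : ℕ) (bl : List WT) (rest : JE) :
    fBrs N off (bl :: rest) =
      (if rest.isEmpty then (∅ : Finset (ℕ × ℕ))
        else {(off + (bl.map WT.leaves).sum + 1, N + 1)}) ∪
      fBrs N (off + (bl.map WT.leaves).sum) rest := by rw [fBrs]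

theorem fBrs_snd (N : ℕ) : ∀ (off : ℕ) (L : JE), ∀ p ∈ fBrs N off L, p.2 = N + 1 := by
  intro off L
  induction L generalizing off with
  | nil => simp [fBrs_nil]
  | cons bl rest ih =>
    intro p hp
    rw [fBrs_cons, Finset.mem_union] at hp
    rcases hp with hp | hp
    · split at hp
      · simp at hp
      · rw [Finset.mem_singleton] at hp; rw [hp]
    · exact ih _ p hp

theorem fBrs_lb (N : ℕ) : ∀ (off : ℕ) (L : JE), (∀ bl ∈ L, 1 ≤ (bl.map WT.leaves).sum) →
    ∀ p ∈ fBrs N off L, off + 2 ≤ p.1 := by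
  intro off L
  induction L generalizing off with
  | nil => simp [fBrs_nil]
  | cons bl rest ih =>
    intro h p hp
    have hbl : 1 ≤ (bl.map WT.leaves).sum := h bl (by simp)
    rw [fBrs_cons, Finset.mem_union] at hp
    rcases hp with hp | hp
    · split at hp
      · simp at hp
      · rw [Finset.mem_singleton] at hp
        rw [hp]
        omega
    · have := ih (off + (bl.map WT.leaves).sum) (fun x hx => h x (by simp [hx])) p hp
      omega

theorem prefix_eq : ∀ (xs : List WT) (ys a b : List WT), xs ++ a = ys ++ b →
    (xs.map WT.leaves).sum = (ys.map WT.leaves).sum →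
    (∀ t ∈ xs, 1 ≤ t.leaves) → (∀ t ∈ ys, 1 ≤ t.leaves) → xs = ys := by
  intro xs
  induction xs with
  | nil =>
    intro ys a b _ hsum _ hy
    rcases ys with _ | ⟨y, ys⟩
    · rfl
    · exfalso
      have := hy y (by simp)
      simp only [List.map_nil, List.sum_nil, List.map_cons, List.sum_cons] at hsum
      omega
  | cons x xs ih =>
    intro ys a b happ hsum hx hy
    rcases ys with _ | ⟨y, ys⟩
    · exfalso
      have := hx x (by simp)
      simp only [List.map_nil, List.sum_nil, List.map_cons, List.sum_cons] at hsum
      omega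
    · simp only [List.cons_append, List.cons.injEq] at happ
      obtain ⟨rfl, happ⟩ := happ
      simp only [List.map_cons, List.sum_cons] at hsum
      have := ih ys a b happ (by omega) (fun t ht => hx t (by simp [ht]))
        (fun t ht => hy t (by simp [ht]))
      rw [this]

/-- Validity-style hypothesis used for the `fBrs` injectivity: every block is
nonempty and all its trees have at least one leaf. -/
def JEgood (L : JE) : Prop := ∀ bl ∈ L, bl ≠ [] ∧ ∀ t ∈ bl, 1 ≤ t.leaves

theorem JEgood_letters {L : JE} (h : JEgood L) : ∀ bl ∈ L, 1 ≤ (bl.map WT.leaves).sum := by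
  intro bl hbl
  obtain ⟨hne, hle⟩ := h bl hbl
  obtain ⟨a, ha⟩ := List.exists_mem_of_ne_nil bl hne
  have h1 := hle a ha
  have h2 : a.leaves ≤ (bl.map WT.leaves).sum :=
    List.single_le_sum (by simp) _ (List.mem_map_of_mem ha)
  omega

theorem fBrs_sing (N off : ℕ) (bl : List WT) : fBrs N off [bl] = ∅ := by
  rw [fBrs_cons, fBrs_nil]
  simp

theorem fBrs_cons₂ (N off : ℕ) (bl bl₂ : List WT) (rest₂ : JE) :
    fBrs N off (bl :: bl₂ :: rest₂) =
      insert (off + (bl.map WT.leaves).sum + 1, N + 1)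
        (fBrs N (off + (bl.map WT.leaves).sum) (bl₂ :: rest₂)) := by
  rw [fBrs_cons]
  simp [Finset.insert_eq, -Finset.singleton_union]

theorem fBrs_inj (N : ℕ) : ∀ (L : JE) (off : ℕ) (M : JE), JEgood L → JEgood M →
    L.flatten = M.flatten → fBrs N off L = fBrs N off M → L = M := by
  intro L
  induction L with
  | nil =>
    intro off M hL hM hflat _
    rcases M with _ | ⟨bl', rest'⟩
    · rfl
    · exfalso
      obtain ⟨hne, _⟩ := hM bl' (by simp)
      obtain ⟨a, ha⟩ := List.exists_mem_of_ne_nil bl' hne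
      have : a ∈ (List.nil : JE).flatten := by
        rw [hflat]; simp only [List.flatten_cons]
        exact List.mem_append_left _ ha
      simp at this
  | cons bl rest ih =>
    intro off M hL hM hflat heq
    rcases M with _ | ⟨bl', rest'⟩
    · exfalso
      obtain ⟨hne, _⟩ := hL bl (by simp)
      obtain ⟨a, ha⟩ := List.exists_mem_of_ne_nil bl hne
      have : a ∈ (List.nil : JE).flatten := by
        rw [← hflat]; simp only [List.flatten_cons]
        exact List.mem_append_left _ ha
      simp at this
    · have hLrest : JEgood rest := fun x hx => hL x (by simp [hx])
      have hMrest : JEgood rest' := fun x hx => hM x (by simp [hx])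
      have hblle : ∀ t ∈ bl, 1 ≤ t.leaves := (hL bl (by simp)).2
      have hblle' : ∀ t ∈ bl', 1 ≤ t.leaves := (hM bl' (by simp)).2
      simp only [List.flatten_cons] at hflat
      rcases rest with _ | ⟨bl₂, rest₂⟩ <;> rcases rest' with _ | ⟨bl₂', rest₂'⟩
      · -- both singletons
        simp only [List.flatten_nil, List.append_nil] at hflat
        rw [hflat]
      · -- L singleton, M not
        exfalso
        have hmem : (off + (bl'.map WT.leaves).sum + 1, N + 1) ∈ fBrs N off [bl] := by
          rw [heq, fBrs_cons₂]
          exact Finset.mem_insert_self _ _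
        rw [fBrs_sing] at hmem
        simp at hmem
      · exfalso
        have hmem : (off + (bl.map WT.leaves).sum + 1, N + 1) ∈ fBrs N off [bl'] := by
          rw [← heq, fBrs_cons₂]
          exact Finset.mem_insert_self _ _
        rw [fBrs_sing] at hmem
        simp at hmem
      · -- both have ≥ 2 factors
        have hub : ∀ p ∈ fBrs N (off + (bl.map WT.leaves).sum) (bl₂ :: rest₂),
            off + (bl.map WT.leaves).sum + 2 ≤ p.1 :=
          fBrs_lb N _ _ (JEgood_letters hLrest)
        have hub' : ∀ p ∈ fBrs N (off + (bl'.map WT.leaves).sum) (bl₂' :: rest₂'),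
            off + (bl'.map WT.leaves).sum + 2 ≤ p.1 :=
          fBrs_lb N _ _ (JEgood_letters hMrest)
        have hss : (bl.map WT.leaves).sum = (bl'.map WT.leaves).sum := by
          have h1 : (off + (bl.map WT.leaves).sum + 1, N + 1) ∈
              fBrs N off (bl' :: bl₂' :: rest₂') := by
            rw [← heq, fBrs_cons₂]
            exact Finset.mem_insert_self _ _
          rw [fBrs_cons₂, Finset.mem_insert] at h1
          have h2 : (off + (bl'.map WT.leaves).sum + 1, N + 1) ∈
              fBrs N off (bl :: bl₂ :: rest₂) := by
            rw [heq, fBrs_cons₂]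
            exact Finset.mem_insert_self _ _
          rw [fBrs_cons₂, Finset.mem_insert] at h2
          rcases h1 with h1 | h1
          · have := congrArg Prod.fst h1
            simp only [Prod.fst] at this
            omega
          · have b1 := hub' _ h1
            simp only [Prod.fst] at b1
            rcases h2 with h2 | h2
            · have := congrArg Prod.fst h2
              simp only [Prod.fst] at this
              omega
            · have b2 := hub _ h2
              simp only [Prod.fst] at b2
              omega
        rw [← hss] at hub'
        have hbl : bl = bl' := prefix_eq bl bl' _ _ hflat hss hblle hblle'
        have hflat' : (bl₂ :: rest₂).flatten = (bl₂' :: rest₂').flatten := by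
          rw [hbl] at hflat
          exact List.append_cancel_left hflat
        have htail : fBrs N (off + (bl.map WT.leaves).sum) (bl₂ :: rest₂) =
            fBrs N (off + (bl.map WT.leaves).sum) (bl₂' :: rest₂') := by
          rw [fBrs_cons₂, fBrs_cons₂, ← hss] at heq
          have n1 : (off + (bl.map WT.leaves).sum + 1, N + 1) ∉
              fBrs N (off + (bl.map WT.leaves).sum) (bl₂ :: rest₂) := by
            intro hmem
            have := hub _ hmem
            simp only [Prod.fst] at this
            omega
          have n2 : (off + (bl.map WT.leaves).sum + 1, N + 1) ∉
              fBrs N (off + (bl.map WT.leaves).sum) (bl₂' :: rest₂') := by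
            intro hmem
            have := hub' _ hmem
            simp only [Prod.fst] at this
            omega
          rw [← Finset.erase_insert n1, ← Finset.erase_insert n2, heq]
        have := ih (off + (bl.map WT.leaves).sum) (bl₂' :: rest₂') hLrest hMrest hflat' htail
        rw [hbl, this]

theorem flatten_letters : ∀ (L : JE), (L.flatten.map WT.leaves).sum = L.letters := by
  intro L
  induction L with
  | nil => simp [JE.letters]
  | cons bl rest ih =>
    simp only [List.flatten_cons, List.map_append, List.sum_append, ih, JE.letters,
      List.map_cons, List.sum_cons]

theorem phiFun_injective' (n : ℕ) (L M : {L : JE // L.valid ∧ L.letters = n}) :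
    phiFun n L.1 = phiFun n M.1 → L = M := by
  obtain ⟨L, ⟨hLv, hLn⟩⟩ := L
  obtain ⟨M, ⟨hMv, hMn⟩⟩ := M
  intro heq
  simp only [Subtype.mk.injEq]
  have hLb := hLv.2
  have hMb := hMv.2
  have hLflat : ∀ t ∈ L.flatten, t.valid := by
    intro t ht
    rw [List.mem_flatten] at ht
    obtain ⟨bl, hbl, ht⟩ := ht
    exact (hLb bl hbl).2 t ht
  have hMflat : ∀ t ∈ M.flatten, t.valid := by
    intro t ht
    rw [List.mem_flatten] at ht
    obtain ⟨bl, hbl, ht⟩ := ht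
    exact (hMb bl hbl).2 t ht
  have hLsum : (L.flatten.map WT.leaves).sum = n := by rw [flatten_letters, hLn]
  have hMsum : (M.flatten.map WT.leaves).sum = n := by rw [flatten_letters, hMn]
  have hLgood : JEgood L := fun bl hbl =>
    ⟨(hLb bl hbl).1, fun t ht => WT.leaves_pos t ((hLb bl hbl).2 t ht)⟩
  have hMgood : JEgood M := fun bl hbl =>
    ⟨(hMb bl hbl).1, fun t ht => WT.leaves_pos t ((hMb bl hbl).2 t ht)⟩
  unfold phiFun at heq
  -- split the union equality using second coordinates
  have hbrseq : brsList 0 L.flatten = brsList 0 M.flatten := by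
    apply Finset.Subset.antisymm
    · intro p hp
      have hb := brsList_bdd 0 L.flatten hLflat p hp
      rw [hLsum] at hb
      have : p ∈ brsList 0 M.flatten ∪ fBrs n 0 M := by
        rw [← heq]; exact Finset.mem_union_left _ hp
      rw [Finset.mem_union] at this
      rcases this with h | h
      · exact h
      · have := fBrs_snd n 0 M p h
        omega
    · intro p hp
      have hb := brsList_bdd 0 M.flatten hMflat p hp
      rw [hMsum] at hb
      have : p ∈ brsList 0 L.flatten ∪ fBrs n 0 L := by
        rw [heq]; exact Finset.mem_union_left _ hp
      rw [Finset.mem_union] at this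
      rcases this with h | h
      · exact h
      · have := fBrs_snd n 0 L p h
        omega
  have hfeq : fBrs n 0 L = fBrs n 0 M := by
    apply Finset.Subset.antisymm
    · intro p hp
      have h2 := fBrs_snd n 0 L p hp
      have : p ∈ brsList 0 M.flatten ∪ fBrs n 0 M := by
        rw [← heq]; exact Finset.mem_union_right _ hp
      rw [Finset.mem_union] at this
      rcases this with h | h
      · have := brsList_bdd 0 M.flatten hMflat p h
        rw [hMsum] at this
        omega
      · exact h
    · intro p hp
      have h2 := fBrs_snd n 0 M p hp
      have : p ∈ brsList 0 L.flatten ∪ fBrs n 0 L := by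
        rw [heq]; exact Finset.mem_union_right _ hp
      rw [Finset.mem_union] at this
      rcases this with h | h
      · have := brsList_bdd 0 L.flatten hLflat p h
        rw [hLsum] at this
        omega
      · exact h
  have hflat : L.flatten = M.flatten :=
    brsList_inj 0 L.flatten M.flatten hLflat hMflat (by rw [hLsum, hMsum]) hbrseq
  exact fBrs_inj n L 0 M hLgood hMgood hflat hfeq

/-- `φ` is injective on `𝔍'_n`: distinct placements of `f`s and `·`s (together
with the domain bracketings) yield distinct bracketings of the extended word,
each `f` corresponding to a parenthesis pair to the right of which `a_{n+1}`
appears, and each `·` to an absent parenthesis. -/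
theorem phiFun_injective (n : ℕ) (L M : {L : JE // L.valid ∧ L.letters = n}) :
    phiFun n L.1 = phiFun n M.1 → L = M := by
  exact phiFun_injective' n L M
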